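/- The conditional expected spot price is bounded by the midpoint of the price range: for every p ∈ [π̲, π̄] with F(p) > 0, (∫_{π̲}^{p} x f(x) dx)/F(p) ≤ (π̲ + π̄)/2. In particular the mean spot price ∫_{π̲}^{π̄} x f(x) dx is at most (π̲ + π̄)/2. -/

import Mathlib

/-! For `f` antitone on `[a, b]` and `m = (a + b) / 2`, the integrand `(x - m) (f x - f m)` is
pointwise nonpositive, while `∫ (x - m) f m = 0`; hence `∫ x f x ≤ m ∫ f`. Applied on `[π̲, p]` this
bounds the conditional mean by `(π̲ + p) / 2 ≤ (π̲ + π̄) / 2`. -/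

open Set intervalIntegral

section Midpoint

variable {f : ℝ → ℝ} {a b : ℝ}

lemma integral_sub_midpoint_mul_nonpos_of_antitoneOn (hab : a ≤ b) (hf : AntitoneOn f (Icc a b)) :
    ∫ x in a..b, (x - (a + b) / 2) * f x ≤ 0 := by
  have hm : (a + b) / 2 ∈ Icc a b := ⟨by linarith, by linarith⟩
  set m := (a + b) / 2
  have hf_int : IntervalIntegrable f MeasureTheory.volume a b :=
    (hf.mono (uIcc_of_le hab).subset).intervalIntegrable
  have hpointwise : ∀ x ∈ Icc a b, (x - m) * f x ≤ (x - m) * f m := by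
    intro x hx
    rcases le_total x m with hxm | hmx
    · exact mul_le_mul_of_nonpos_left (hf hx hm hxm) (by linarith)
    · exact mul_le_mul_of_nonneg_left (hf hm hx hmx) (by linarith)
  have hcentered : ∫ x in a..b, (x - m) * f m = 0 := by
    rw [integral_mul_const, integral_sub intervalIntegral.intervalIntegrable_id
      intervalIntegrable_const, integral_id, integral_const, smul_eq_mul]
    ring
  calc ∫ x in a..b, (x - m) * f x
      ≤ ∫ x in a..b, (x - m) * f m :=
        integral_mono_on hab (hf_int.continuousOn_mul (by fun_prop))
          ((by fun_prop : Continuous fun x => (x - m) * f m).intervalIntegrable a b) hpointwise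
    _ = 0 := hcentered

lemma integral_mul_le_midpoint_mul_integral_of_antitoneOn (hab : a ≤ b)
    (hf : AntitoneOn f (Icc a b)) :
    ∫ x in a..b, x * f x ≤ (a + b) / 2 * ∫ x in a..b, f x := by
  have hf_int : IntervalIntegrable f MeasureTheory.volume a b :=
    (hf.mono (uIcc_of_le hab).subset).intervalIntegrable
  have hsplit : ∫ x in a..b, x * f x
      = (∫ x in a..b, (x - (a + b) / 2) * f x) + (a + b) / 2 * ∫ x in a..b, f x := by
    rw [← integral_const_mul, ← integral_add (hf_int.continuousOn_mul (by fun_prop))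
      (hf_int.const_mul _)]
    congr 1 with x
    ring
  linarith [integral_sub_midpoint_mul_nonpos_of_antitoneOn hab hf]

end Midpoint

theorem stmt_2
    (πlo πhi : ℝ) (f F : ℝ → ℝ)
    (hlt : πlo < πhi)
    (hanti : ∀ x ∈ Set.Icc πlo πhi, ∀ y ∈ Set.Icc πlo πhi, x ≤ y → f y ≤ f x)
    (hone : (∫ x in πlo..πhi, f x) = 1)
    (hF : ∀ p, F p = ∫ x in πlo..p, f x) :
    (∀ p ∈ Set.Icc πlo πhi, 0 < F p →
      (∫ x in πlo..p, x * f x) / F p ≤ (πlo + πhi) / 2) ∧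
    (∫ x in πlo..πhi, x * f x) ≤ (πlo + πhi) / 2 := by
  have hf : AntitoneOn f (Icc πlo πhi) := fun x hx y hy hxy => hanti x hx y hy hxy
  refine ⟨fun p hp hFp => ?_, ?_⟩
  · rw [hF p] at hFp ⊢
    rw [div_le_iff₀ hFp]
    calc ∫ x in πlo..p, x * f x
        ≤ (πlo + p) / 2 * ∫ x in πlo..p, f x :=
          integral_mul_le_midpoint_mul_integral_of_antitoneOn hp.1
            (hf.mono (Icc_subset_Icc_right hp.2))
      _ ≤ (πlo + πhi) / 2 * ∫ x in πlo..p, f x := by gcongr; exact hp.2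
  · simpa [hone] using integral_mul_le_midpoint_mul_integral_of_antitoneOn hlt.le hf
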